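/- arXiv:1612.03370 — 4 statements merged into one kernel-verified Lean document; each statement's English description precedes it below -/
import Mathlib

section
/- For every integer τ ≥ 1, the quantity (1/(2π)) ∫_{-π}^{π} (τ + 4 + τ cos k)/(1 + cos k) · Re(2/(1+e^{-ik})) dk equals 1/τ − √(2τ+4)/(τ(τ+2)). -/
open Real intervalIntegral

/-! On the unit circle `Re (2 / (1 + z)) = 1`, so the integrand is
`(1 + cos k) / (a + b cos k) = 1 / b - ((a - b) / b) / (a + b cos k)` with `a = τ + 4`, `b = τ`,
and `∫_{-π}^{π} dk / (a + b cos k) = 2π / √(a² - b²)` for `|b| < a`. -/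

-- Stated multiplied by `1 + z.re` so that it also holds at `z = -1`, where `2 / 0 = 0`.
theorem Complex.one_add_re_mul_re_two_div_one_add {z : ℂ} (hz : ‖z‖ = 1) :
    (1 + z.re) * (2 / (1 + z)).re = 1 + z.re := by
  have hnormSq : Complex.normSq (1 + z) = 2 * (1 + z.re) := by
    have hnorm := Complex.normSq_eq_norm_sq z
    rw [hz, Complex.normSq_apply] at hnorm
    simp only [Complex.normSq_apply, Complex.add_re, Complex.one_re, Complex.add_im,
      Complex.one_im]
    linear_combination hnorm
  rcases eq_or_ne (1 + z.re) 0 with h | h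
  · rw [h, zero_mul]
  · rw [Complex.div_re, hnormSq]
    simp only [Complex.re_ofNat, Complex.im_ofNat, Complex.add_re, Complex.one_re]
    field_simp
    ring

/-- A primitive of `(a + b cos x)⁻¹` for `|b| < a`; unlike the one given by the substitution
`t = tan (x / 2)`, it is smooth on all of `ℝ`. -/
noncomputable def invAddMulCosPrimitive (a b x : ℝ) : ℝ :=
  (x - 2 * arctan (b * sin x / (a + b * cos x + √(a ^ 2 - b ^ 2)))) / √(a ^ 2 - b ^ 2)

section
variable {a b : ℝ}

theorem add_mul_cos_pos (h : |b| < a) (x : ℝ) : 0 < a + b * cos x := by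
  have := neg_abs_le (b * cos x)
  rw [abs_mul] at this
  nlinarith [abs_cos_le_one x, abs_nonneg b]

theorem continuous_inv_add_mul_cos (h : |b| < a) : Continuous fun x => (a + b * cos x)⁻¹ :=
  (continuous_const.add (continuous_const.mul continuous_cos)).inv₀ fun x =>
    (add_mul_cos_pos h x).ne'

theorem hasDerivAt_invAddMulCosPrimitive (h : |b| < a) (x : ℝ) :
    HasDerivAt (invAddMulCosPrimitive a b) (a + b * cos x)⁻¹ x := by
  have hab : 0 < a ^ 2 - b ^ 2 := by nlinarith [abs_nonneg b, sq_abs b]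
  set s := √(a ^ 2 - b ^ 2)
  have hs2 : s ^ 2 = a ^ 2 - b ^ 2 := sq_sqrt hab.le
  have hs : 0 < s := sqrt_pos.2 hab
  have hD := add_mul_cos_pos h x
  have ha : 0 < a := (abs_nonneg b).trans_lt h
  have hE : 0 < a + b * cos x + s := by linarith
  have hquot : HasDerivAt (fun x => b * sin x / (a + b * cos x + s))
      ((b * cos x * (a + b * cos x + s) - b * sin x * (b * -sin x)) / (a + b * cos x + s) ^ 2) x :=
    ((hasDerivAt_sin x).const_mul b).div
      ((((hasDerivAt_cos x).const_mul b).const_add a).add_const s) hE.ne'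
  have hF : HasDerivAt (invAddMulCosPrimitive a b) _ x :=
    ((hasDerivAt_id' x).sub (hquot.arctan.const_mul 2)).div_const s
  have h1 : 1 + (b * sin x / (a + b * cos x + s)) ^ 2
      = 2 * (a + b * cos x) * (a + s) / (a + b * cos x + s) ^ 2 := by
    field_simp
    linear_combination hs2 + b ^ 2 * sin_sq_add_cos_sq x
  refine hF.congr_deriv ?_
  rw [h1]
  field_simp
  linear_combination -hs2 - b ^ 2 * sin_sq_add_cos_sq x

theorem integral_inv_add_mul_cos (h : |b| < a) :
    ∫ x in -π..π, (a + b * cos x)⁻¹ = 2 * π / √(a ^ 2 - b ^ 2) := by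
  have hcont := continuous_inv_add_mul_cos h
  rw [integral_eq_sub_of_hasDerivAt (fun x _ => hasDerivAt_invAddMulCosPrimitive h x)
    (hcont.intervalIntegrable _ _)]
  simp only [invAddMulCosPrimitive, sin_pi, sin_neg, neg_zero, mul_zero, zero_div, arctan_zero]
  ring

theorem integral_one_add_cos_div_add_mul_cos (h : |b| < a) (hb : b ≠ 0) :
    ∫ x in -π..π, (1 + cos x) / (a + b * cos x)
      = 2 * π / b - (a - b) / b * (2 * π / √(a ^ 2 - b ^ 2)) := by
  have hsplit : ∀ x, (1 + cos x) / (a + b * cos x) = b⁻¹ - (a - b) / b * (a + b * cos x)⁻¹ := by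
    intro x
    have hD := (add_mul_cos_pos h x).ne'
    rw [div_eq_iff hD, sub_mul, mul_assoc, inv_mul_cancel₀ hD]
    field_simp
    ring
  have hcont := continuous_inv_add_mul_cos h
  simp_rw [hsplit]
  rw [integral_sub intervalIntegrable_const ((hcont.intervalIntegrable _ _).const_mul _),
    integral_const_mul, integral_inv_add_mul_cos h, integral_const]
  simp only [smul_eq_mul, sub_neg_eq_add]
  ring

end

theorem stmt_0 (τ : ℤ) (hτ : 1 ≤ τ) :
    (1 / (2 * π)) * ∫ k in (-π)..π,
        ((1 + Real.cos k) / ((τ : ℝ) + 4 + (τ : ℝ) * Real.cos k)) *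
          (2 / (1 + Complex.exp (-(Complex.I * (k : ℂ))))).re
      = 1 / (τ : ℝ) - Real.sqrt (2 * (τ : ℝ) + 4) / ((τ : ℝ) * ((τ : ℝ) + 2)) := by
  have ht : (1 : ℝ) ≤ τ := by exact_mod_cast hτ
  have hintegrand : ∀ k : ℝ, (1 + cos k) / ((τ : ℝ) + 4 + τ * cos k) *
      (2 / (1 + Complex.exp (-(Complex.I * k)))).re = (1 + cos k) / ((τ : ℝ) + 4 + τ * cos k) := by
    intro k
    have hre := Complex.one_add_re_mul_re_two_div_one_add (Complex.norm_exp_ofReal_mul_I (-k))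
    rw [Complex.exp_ofReal_mul_I_re, cos_neg] at hre
    rw [div_mul_eq_mul_div, show -(Complex.I * k) = (-k : ℝ) * Complex.I by push_cast; ring, hre]
  have hsqrt : √(((τ : ℝ) + 4) ^ 2 - τ ^ 2) = 2 * √(2 * τ + 4) := by
    rw [show ((τ : ℝ) + 4) ^ 2 - τ ^ 2 = 2 ^ 2 * (2 * τ + 4) by ring, sqrt_mul (by norm_num),
      sqrt_sq (by norm_num)]
  have hq : √(2 * (τ : ℝ) + 4) ^ 2 = 2 * τ + 4 := sq_sqrt (by linarith)
  simp_rw [hintegrand]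
  rw [integral_one_add_cos_div_add_mul_cos (by rw [abs_of_pos (by linarith)]; linarith)
    (by positivity), hsqrt]
  field_simp
  linear_combination 2 * hq
end

section
/- For every positive real τ and complex α, β with |α|² + |β|² = 1, define Ω = √(τ/(τ+2)) and f(x) = [1 + 2Re(conj(α)β) + 2(|β|²−|α|²)x + (1 − 2Re(conj(α)β)(τ+4)/τ)x²] / (π(1 − x²)√(2τ − 2(τ+2)x²)) for x ∈ (−Ω, Ω). Then ∫_{−Ω}^{Ω} f(x) dx = 1 − √(2τ+4)/(2τ+4) − 2(2/τ − (τ+4)√(2τ+4)/(2τ(τ+2)))·Re(conj(α)β). -/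
/-!
Substituting `x = Ω sin θ` removes the square root: the integrand becomes
`(πS)⁻¹ ((A + C + B Ω sin θ) / (1 - Ω² sin² θ) - C)` with `S = √(2τ + 4)`, where `A, B, C` are the
coefficients of the numerator. The odd part integrates to zero over `(-π/2, π/2)`, and the further
substitution `t = tan θ` turns `∫ dθ / (1 - m sin² θ)` into `∫ dt / (1 + (1 - m) t²) = π / √(1 - m)`.
-/

open Real intervalIntegral

open MeasureTheory Set

theorem integral_Ioo_eq_integral_comp_arctan {E : Type*} [NormedAddCommGroup E] [NormedSpace ℝ E]
    (g : ℝ → E) :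
    ∫ θ in Ioo (-(π / 2)) (π / 2), g θ = ∫ t, (1 + t ^ 2)⁻¹ • g (arctan t) := by
  rw [← range_arctan, ← image_univ, integral_image_eq_integral_abs_deriv_smul MeasurableSet.univ
    (fun t _ => (hasDerivAt_arctan' t).hasDerivWithinAt) arctan_injective.injOn,
    Measure.restrict_univ]
  simp_rw [abs_of_pos (inv_pos.2 (by positivity : (0:ℝ) < 1 + _ ^ 2))]

theorem integral_Ioo_eq_integral_mul_cos_smul_comp_mul_sin {E : Type*} [NormedAddCommGroup E]
    [NormedSpace ℝ E] {r : ℝ} (hr : 0 < r) (g : ℝ → E) :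
    ∫ x in Ioo (-r) r, g x = ∫ θ in Ioo (-(π / 2)) (π / 2), (r * cos θ) • g (r * sin θ) := by
  have hsin : sin '' Ioo (-(π / 2)) (π / 2) = Ioo (-1) 1 :=
    sinPartialHomeomorph.image_source_eq_target
  have himage : (fun θ => r * sin θ) '' Ioo (-(π / 2)) (π / 2) = Ioo (-r) r := by
    rw [← image_image (r * ·) sin, hsin, image_mul_left_Ioo hr, mul_neg_one, mul_one]
  rw [← himage, integral_image_eq_integral_abs_deriv_smul measurableSet_Ioo
    (fun θ _ => ((hasDerivAt_sin θ).const_mul r).hasDerivWithinAt)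
    ((mul_right_injective₀ hr.ne').comp_injOn (injOn_sin.mono Ioo_subset_Icc_self))]
  refine setIntegral_congr_fun measurableSet_Ioo fun θ hθ => ?_
  simp only [abs_of_pos (mul_pos hr (cos_pos_of_mem_Ioo hθ))]

theorem one_sub_mul_sin_sq_pos {m : ℝ} (hm : m < 1) (θ : ℝ) : 0 < 1 - m * sin θ ^ 2 := by
  have := sin_sq_le_one θ
  rcases le_or_gt m 0 with h | h <;> nlinarith [sq_nonneg (sin θ)]

theorem integral_sin_div_one_sub_mul_sin_sq (m : ℝ) :
    ∫ θ in -(π / 2)..π / 2, sin θ / (1 - m * sin θ ^ 2) = 0 := by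
  have hodd := integral_comp_neg (a := -(π / 2)) (b := π / 2)
    (fun θ => sin θ / (1 - m * sin θ ^ 2))
  simp only [sin_neg, neg_sq, neg_div, intervalIntegral.integral_neg, neg_neg] at hodd
  linarith

theorem integral_Ioo_inv_one_sub_mul_sin_sq {m : ℝ} (hm : m < 1) :
    ∫ θ in Ioo (-(π / 2)) (π / 2), (1 - m * sin θ ^ 2)⁻¹ = π / √(1 - m) := by
  have hk : 0 < √(1 - m) := sqrt_pos.2 (by linarith)
  have htan : ∀ t : ℝ,
      (1 + t ^ 2)⁻¹ * (1 - m * sin (arctan t) ^ 2)⁻¹ = (1 + (√(1 - m) * t) ^ 2)⁻¹ := by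
    intro t
    have h1 : 0 < 1 + t ^ 2 := by positivity
    rw [sin_arctan, div_pow, sq_sqrt h1.le, mul_pow, sq_sqrt (by linarith), ← mul_inv]
    congr 1
    field_simp
    ring
  rw [integral_Ioo_eq_integral_comp_arctan]
  simp_rw [smul_eq_mul, htan]
  rw [Measure.integral_comp_mul_left (fun t => (1 + t ^ 2)⁻¹), integral_univ_inv_one_add_sq,
    abs_of_pos (inv_pos.2 hk), smul_eq_mul, inv_mul_eq_div]

theorem continuous_add_mul_sin_div_one_sub_mul_sin_sq {m : ℝ} (hm : m < 1) (a b : ℝ) :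
    Continuous fun θ => (a + b * sin θ) / (1 - m * sin θ ^ 2) := by
  fun_prop (disch := exact fun θ => (one_sub_mul_sin_sq_pos hm θ).ne')

theorem integral_add_mul_sin_div_one_sub_mul_sin_sq {m : ℝ} (hm : m < 1) (a b : ℝ) :
    ∫ θ in -(π / 2)..π / 2, (a + b * sin θ) / (1 - m * sin θ ^ 2) = π * a / √(1 - m) := by
  have hD : ∀ θ, 1 - m * sin θ ^ 2 ≠ 0 := fun θ => (one_sub_mul_sin_sq_pos hm θ).ne'
  have hinv : Continuous fun θ => (1 - m * sin θ ^ 2)⁻¹ := by fun_prop (disch := exact hD _)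
  have hsin : Continuous fun θ => sin θ / (1 - m * sin θ ^ 2) := by fun_prop (disch := exact hD _)
  have hsplit : (fun θ => (a + b * sin θ) / (1 - m * sin θ ^ 2)) =
      fun θ => a * (1 - m * sin θ ^ 2)⁻¹ + b * (sin θ / (1 - m * sin θ ^ 2)) := by
    ext θ; ring
  have hpi : -(π / 2) ≤ π / 2 := by linarith [pi_pos]
  rw [hsplit, integral_add ((hinv.intervalIntegrable _ _).const_mul a)
    ((hsin.intervalIntegrable _ _).const_mul b), intervalIntegral.integral_const_mul,
    intervalIntegral.integral_const_mul,
    integral_sin_div_one_sub_mul_sin_sq, integral_of_le hpi, integral_Ioc_eq_integral_Ioo,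
    integral_Ioo_inv_one_sub_mul_sin_sq hm]
  ring

theorem integral_quadratic_div_one_sub_sq_mul_sqrt {r : ℝ} (hr0 : 0 < r) (hr1 : r < 1)
    (a b c : ℝ) :
    ∫ x in -r..r, (a + b * x + c * x ^ 2) / ((1 - x ^ 2) * √(r ^ 2 - x ^ 2)) =
      π * ((a + c) / √(1 - r ^ 2) - c) := by
  have hr2 : r ^ 2 < 1 := by nlinarith
  have hpoint : ∀ θ ∈ Ioo (-(π / 2)) (π / 2),
      (r * cos θ) • ((a + b * (r * sin θ) + c * (r * sin θ) ^ 2) /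
        ((1 - (r * sin θ) ^ 2) * √(r ^ 2 - (r * sin θ) ^ 2))) =
      (a + c + b * r * sin θ) / (1 - r ^ 2 * sin θ ^ 2) - c := by
    intro θ hθ
    have hcos := cos_pos_of_mem_Ioo hθ
    have hD := one_sub_mul_sin_sq_pos hr2 θ
    have hsqrt : √(r ^ 2 - (r * sin θ) ^ 2) = r * cos θ := by
      rw [← sqrt_sq (by positivity : 0 ≤ r * cos θ), mul_pow, mul_pow, cos_sq']
      ring_nf
    rw [smul_eq_mul, hsqrt, mul_pow]
    field_simp
    ring
  have hpi : -(π / 2) ≤ π / 2 := by linarith [pi_pos]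
  rw [integral_of_le (by linarith), integral_Ioc_eq_integral_Ioo,
    integral_Ioo_eq_integral_mul_cos_smul_comp_mul_sin hr0,
    setIntegral_congr_fun measurableSet_Ioo hpoint, ← integral_Ioc_eq_integral_Ioo,
    ← integral_of_le hpi, integral_sub
      ((continuous_add_mul_sin_div_one_sub_mul_sin_sq hr2 _ _).intervalIntegrable _ _)
      intervalIntegrable_const, integral_add_mul_sin_div_one_sub_mul_sin_sq hr2,
    intervalIntegral.integral_const, smul_eq_mul]
  ring

theorem stmt_12_general (τ : ℝ) (hτ : 0 < τ) (α β : ℂ) :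
    let Ω : ℝ := Real.sqrt (τ / (τ + 2))
    (∫ x in (-Ω)..Ω,
        (1 + 2 * ((starRingEnd ℂ) α * β).re +
          2 * (‖β‖ ^ 2 - ‖α‖ ^ 2) * x +
          (1 - 2 * ((starRingEnd ℂ) α * β).re * (τ + 4) / τ) * x ^ 2) /
        (π * (1 - x ^ 2) * Real.sqrt (2 * τ - 2 * (τ + 2) * x ^ 2)))
      = 1 - Real.sqrt (2 * τ + 4) / (2 * τ + 4) -
          2 * (2 / τ - (τ + 4) * Real.sqrt (2 * τ + 4) / (2 * τ * (τ + 2))) *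
            ((starRingEnd ℂ) α * β).re := by
  intro Ω
  set S := √(2 * τ + 4)
  have hΩsq : Ω ^ 2 = τ / (τ + 2) := sq_sqrt (by positivity)
  have hΩ1 : Ω < 1 := by
    rw [← sqrt_one, sqrt_lt_sqrt_iff (by positivity), div_lt_one (by linarith)]
    linarith
  have hS : 0 < S := sqrt_pos.2 (by linarith)
  have hSsq : S ^ 2 = 2 * τ + 4 := sq_sqrt (by linarith)
  have hk : √(1 - Ω ^ 2) = 2 / S := by
    rw [eq_div_iff hS.ne', mul_comm, ← sqrt_sq hS.le, ← sqrt_mul (sq_nonneg _), hSsq, hΩsq,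
      show (2 * τ + 4) * (1 - τ / (τ + 2)) = 2 ^ 2 by field_simp; ring, sqrt_sq zero_le_two]
  have hsqrt : ∀ x : ℝ, √(2 * τ - 2 * (τ + 2) * x ^ 2) = S * √(Ω ^ 2 - x ^ 2) := fun x => by
    rw [← sqrt_mul (by linarith), hΩsq]
    congr 1
    field_simp
    ring
  have hfactor : ∀ N x : ℝ, N / (π * (1 - x ^ 2) * (S * √(Ω ^ 2 - x ^ 2))) =
      N / ((1 - x ^ 2) * √(Ω ^ 2 - x ^ 2)) / (π * S) := fun N x => by
    rw [div_div]
    congr 1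
    ring
  simp_rw [hsqrt, hfactor]
  rw [intervalIntegral.integral_div, integral_quadratic_div_one_sub_sq_mul_sqrt
      (sqrt_pos.2 (by positivity)) hΩ1, hk]
  field_simp
  linear_combination
    (2 * τ * (τ + 2) - 2 * ((starRingEnd ℂ) α * β).re * (τ + 4) * (2 * τ + 4)) * hSsq

theorem stmt_12 (τ : ℝ) (hτ : 0 < τ) (α β : ℂ)
    (h : ‖α‖ ^ 2 + ‖β‖ ^ 2 = 1) :
    let Ω : ℝ := Real.sqrt (τ / (τ + 2))
    (∫ x in (-Ω)..Ω,
        (1 + 2 * ((starRingEnd ℂ) α * β).re +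
          2 * (‖β‖ ^ 2 - ‖α‖ ^ 2) * x +
          (1 - 2 * ((starRingEnd ℂ) α * β).re * (τ + 4) / τ) * x ^ 2) /
        (π * (1 - x ^ 2) * Real.sqrt (2 * τ - 2 * (τ + 2) * x ^ 2)))
      = 1 - Real.sqrt (2 * τ + 4) / (2 * τ + 4) -
          2 * (2 / τ - (τ + 4) * Real.sqrt (2 * τ + 4) / (2 * τ * (τ + 2))) *
            ((starRingEnd ℂ) α * β).re :=
  stmt_12_general τ hτ α β
end

section
/- For every positive real τ and Ω = √(τ/(τ+2)), ∫_{−Ω}^{Ω} x²(1 + x²)/(π(1 − x²)√(2τ − 2(τ+2)x²)) dx = 1 − (5τ+8)√(2τ+4)/(2τ+4)². -/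
open Real intervalIntegral Set

/-!
For `0 < a < 1` write `b = √(1 - a²)` and `S = √(a² - x²)`. Since
`x²(1 + x²)/(1 - x²) = -x² - 2 + 2/(1 - x²)`, the integrand `x²(1 + x²)/((1 - x²) S)` has the
elementary primitive `(2/b) arcsin (b x/(a √(1 - x²))) - (a²/2 + 2) arcsin (x/a) + x S/2`, which
is odd and continuous on `[-a, a]`. The integrand is nonnegative, hence integrable, and the
fundamental theorem of calculus gives `π (2/b - a²/2 - 2)` for its integral over `[-a, a]`.
For `a = Ω` one has `b = 2/√(2τ + 4)` and `√(2τ - 2(τ + 2)x²) = √(2τ + 4) S`, which turns this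
into the stated value.
-/

theorem HasDerivAt.arcsin {f : ℝ → ℝ} {f' x : ℝ} (hf : HasDerivAt f f' x) (hx : f x ^ 2 < 1) :
    HasDerivAt (fun y => arcsin (f y)) (f' / √(1 - f x ^ 2)) x := by
  have habs : |f x| < 1 := by rwa [← sq_lt_one_iff_abs_lt_one]
  have := (hasDerivAt_arcsin (abs_lt.1 habs).1.ne' (abs_lt.1 habs).2.ne).comp x hf
  rwa [one_div_mul_eq_div] at this

section Primitive

variable {a x : ℝ}

theorem hasDerivAt_arcsin_div (ha : 0 < a) (hx : x ^ 2 < a ^ 2) :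
    HasDerivAt (fun y => arcsin (y / a)) (1 / √(a ^ 2 - x ^ 2)) x := by
  have hsq : (x / a) ^ 2 < 1 := by rwa [div_pow, div_lt_one (by positivity)]
  convert ((hasDerivAt_id' x).div_const a).arcsin hsq using 1
  rw [show 1 - (x / a) ^ 2 = (a ^ 2 - x ^ 2) / a ^ 2 by field_simp, sqrt_div' _ (sq_nonneg a),
    sqrt_sq ha.le]
  field_simp

theorem hasDerivAt_mul_sqrt_sq_sub_sq (hx : x ^ 2 < a ^ 2) :
    HasDerivAt (fun y => y * √(a ^ 2 - y ^ 2)) ((a ^ 2 - 2 * x ^ 2) / √(a ^ 2 - x ^ 2)) x := by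
  have hS : 0 < a ^ 2 - x ^ 2 := by linarith
  have hS' := sq_sqrt hS.le
  refine ((hasDerivAt_id' x).fun_mul
    (((hasDerivAt_pow 2 x).const_sub (a ^ 2)).sqrt hS.ne')).congr_deriv ?_
  have : √(a ^ 2 - x ^ 2) ≠ 0 := (sqrt_pos.2 hS).ne'
  field_simp
  linear_combination 2 * hS'

theorem hasDerivAt_arcsin_mul_div_sqrt_one_sub_sq {b : ℝ} (ha : 0 < a) (hb : b ^ 2 = 1 - a ^ 2)
    (hx : x ^ 2 < a ^ 2) :
    HasDerivAt (fun y => arcsin (b * y / (a * √(1 - y ^ 2))))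
      (b / ((1 - x ^ 2) * √(a ^ 2 - x ^ 2))) x := by
  have hS : 0 < a ^ 2 - x ^ 2 := by linarith
  have hT : 0 < 1 - x ^ 2 := by nlinarith [sq_nonneg b]
  have hT' := sq_sqrt hT.le
  have hT0 : 0 < √(1 - x ^ 2) := sqrt_pos.2 hT
  have hS0 : 0 < √(a ^ 2 - x ^ 2) := sqrt_pos.2 hS
  have hquot : 1 - (b * x / (a * √(1 - x ^ 2))) ^ 2 = (a ^ 2 - x ^ 2) / (a * √(1 - x ^ 2)) ^ 2 := by
    field_simp
    linear_combination a ^ 2 * hT' - x ^ 2 * hb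
  have hsq : (b * x / (a * √(1 - x ^ 2))) ^ 2 < 1 := by
    have : 0 < (a ^ 2 - x ^ 2) / (a * √(1 - x ^ 2)) ^ 2 := by positivity
    linarith
  have hinner := ((hasDerivAt_id' x).const_mul b).fun_div
    ((((hasDerivAt_pow 2 x).const_sub 1).sqrt hT.ne').const_mul a) (by positivity)
  refine (hinner.arcsin hsq).congr_deriv ?_
  rw [hquot, sqrt_div' _ (sq_nonneg _), sqrt_sq (by positivity)]
  field_simp
  linear_combination -2 * b * x ^ 2 * hT'

noncomputable def secondMomentPrimitive (a y : ℝ) : ℝ :=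
  2 / √(1 - a ^ 2) * arcsin (√(1 - a ^ 2) * y / (a * √(1 - y ^ 2)))
    - (a ^ 2 / 2 + 2) * arcsin (y / a) + y * √(a ^ 2 - y ^ 2) / 2

theorem hasDerivAt_secondMomentPrimitive (ha : 0 < a) (ha1 : a < 1) (hx : x ^ 2 < a ^ 2) :
    HasDerivAt (secondMomentPrimitive a) (x ^ 2 * (1 + x ^ 2) / ((1 - x ^ 2) * √(a ^ 2 - x ^ 2)))
      x := by
  have hb : 0 < 1 - a ^ 2 := by nlinarith
  have hT : 0 < 1 - x ^ 2 := by linarith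
  have hS : 0 < √(a ^ 2 - x ^ 2) := sqrt_pos.2 (by linarith)
  have hb0 : 0 < √(1 - a ^ 2) := sqrt_pos.2 hb
  refine ((((hasDerivAt_arcsin_mul_div_sqrt_one_sub_sq ha (sq_sqrt hb.le) hx).const_mul
    (2 / √(1 - a ^ 2))).sub ((hasDerivAt_arcsin_div ha hx).const_mul (a ^ 2 / 2 + 2))).add
    ((hasDerivAt_mul_sqrt_sq_sub_sq hx).div_const 2)).congr_deriv ?_
  field_simp
  ring

theorem continuousOn_secondMomentPrimitive (ha : 0 < a) (ha1 : a < 1) :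
    ContinuousOn (secondMomentPrimitive a) (Icc (-a) a) := by
  have hden : ∀ y ∈ Icc (-a) a, a * √(1 - y ^ 2) ≠ 0 := fun y hy =>
    mul_ne_zero ha.ne' (sqrt_pos.2 (by nlinarith [hy.1, hy.2])).ne'
  have hinner : ContinuousOn (fun y => √(1 - a ^ 2) * y / (a * √(1 - y ^ 2))) (Icc (-a) a) := by
    fun_prop (disch := exact hden)
  exact ((continuousOn_const.mul (continuous_arcsin.comp_continuousOn hinner)).sub
    (continuous_const.mul (continuous_arcsin.comp (continuous_id.div_const a))).continuousOn).add
    (by fun_prop)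

theorem secondMomentPrimitive_neg (a y : ℝ) :
    secondMomentPrimitive a (-y) = -secondMomentPrimitive a y := by
  simp only [secondMomentPrimitive, neg_sq, mul_neg, neg_div, arcsin_neg]
  ring

theorem secondMomentPrimitive_self (ha : 0 < a) (ha1 : a < 1) :
    secondMomentPrimitive a a = π / √(1 - a ^ 2) - (a ^ 2 / 2 + 2) * (π / 2) := by
  have hb0 : 0 < √(1 - a ^ 2) := sqrt_pos.2 (by nlinarith)
  have hone : √(1 - a ^ 2) * a / (a * √(1 - a ^ 2)) = 1 := by field_simp
  simp only [secondMomentPrimitive, hone, div_self ha.ne', sub_self, sqrt_zero, mul_zero,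
    zero_div, add_zero, arcsin_one]
  ring

theorem integral_sq_mul_one_add_sq_div_one_sub_sq_mul_sqrt (ha : 0 < a) (ha1 : a < 1) :
    ∫ x in (-a)..a, x ^ 2 * (1 + x ^ 2) / ((1 - x ^ 2) * √(a ^ 2 - x ^ 2))
      = π * (2 / √(1 - a ^ 2) - a ^ 2 / 2 - 2) := by
  have hderiv : ∀ x ∈ Ioo (-a) a, HasDerivAt (secondMomentPrimitive a)
      (x ^ 2 * (1 + x ^ 2) / ((1 - x ^ 2) * √(a ^ 2 - x ^ 2))) x := fun x hx =>
    hasDerivAt_secondMomentPrimitive ha ha1 (sq_lt_sq' hx.1 hx.2)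
  have hnonneg : ∀ x ∈ Ioo (-a) a, 0 ≤ x ^ 2 * (1 + x ^ 2) / ((1 - x ^ 2) * √(a ^ 2 - x ^ 2)) :=
    fun x hx => by
      have : 0 < 1 - x ^ 2 := by nlinarith [sq_lt_sq' hx.1 hx.2]
      positivity
  have hcont := continuousOn_secondMomentPrimitive ha ha1
  have hint : IntervalIntegrable _ _ (-a) a :=
    (intervalIntegrable_iff_integrableOn_Ioc_of_le (by linarith)).2
      (integrableOn_deriv_of_nonneg hcont hderiv hnonneg)
  rw [integral_eq_sub_of_hasDerivAt_of_le (by linarith) hcont hderiv hint,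
    secondMomentPrimitive_neg, secondMomentPrimitive_self ha ha1]
  ring

end Primitive

theorem stmt_14 (τ : ℝ) (hτ : 0 < τ) :
    let Ω : ℝ := Real.sqrt (τ / (τ + 2))
    (∫ x in (-Ω)..Ω,
        x ^ 2 * (1 + x ^ 2) / (π * (1 - x ^ 2) * Real.sqrt (2 * τ - 2 * (τ + 2) * x ^ 2)))
      = 1 - (5 * τ + 8) * Real.sqrt (2 * τ + 4) / (2 * τ + 4) ^ 2 := by
  intro Ω
  have hfrac : 0 < τ / (τ + 2) := by positivity
  have hΩ0 : 0 < Ω := sqrt_pos.2 hfrac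
  have hΩ1 : Ω < 1 := (sqrt_lt' one_pos).2 (by rw [one_pow, div_lt_one (by positivity)]; linarith)
  have hΩ2 : Ω ^ 2 = τ / (τ + 2) := sq_sqrt hfrac.le
  set s := √(2 * τ + 4)
  have hs0 : 0 < s := sqrt_pos.2 (by linarith)
  have hs2 : s ^ 2 = 2 * τ + 4 := sq_sqrt (by linarith)
  have hscale (x : ℝ) : √(2 * τ - 2 * (τ + 2) * x ^ 2) = s * √(Ω ^ 2 - x ^ 2) := by
    rw [← sqrt_mul (by linarith), hΩ2]
    congr 1
    field_simp
    ring
  have hsqrt : √(1 - Ω ^ 2) = 2 / s := by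
    rw [show 1 - Ω ^ 2 = (2 / s) ^ 2 by rw [hΩ2, div_pow, hs2]; field_simp; ring,
      sqrt_sq (by positivity)]
  have hintegrand :
      (fun x : ℝ => x ^ 2 * (1 + x ^ 2) / (π * (1 - x ^ 2) * √(2 * τ - 2 * (τ + 2) * x ^ 2)))
        = fun x => (π * s)⁻¹ * (x ^ 2 * (1 + x ^ 2) / ((1 - x ^ 2) * √(Ω ^ 2 - x ^ 2))) := by
    funext x
    rw [hscale]
    field_simp
  rw [hintegrand, integral_const_mul,
    integral_sq_mul_one_add_sq_div_one_sub_sq_mul_sqrt hΩ0 hΩ1, hsqrt, hΩ2, ← hs2]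
  field_simp
  linear_combination (-(5 * τ + 8)) * hs2
end

section
/- For every positive real τ and Ω = √(τ/(τ+2)), ∫_{−Ω}^{Ω} 2x²/(π(1 − x²)√(2τ − 2(τ+2)x²)) dx = 1 − √(2τ+4)/(τ+2). -/
open Real intervalIntegral Set

set_option maxHeartbeats 1000000 in
theorem stmt_16 (τ : ℝ) (hτ : 0 < τ) :
    let Ω : ℝ := Real.sqrt (τ / (τ + 2))
    (∫ x in (-Ω)..Ω,
        2 * x ^ 2 / (π * (1 - x ^ 2) * Real.sqrt (2 * τ - 2 * (τ + 2) * x ^ 2)))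
      = 1 - Real.sqrt (2 * τ + 4) / (τ + 2) := by
  intro Ω
  have h2 : (0:ℝ) < τ + 2 := by linarith
  have hΩsq : Ω ^ 2 = τ / (τ + 2) := Real.sq_sqrt (by positivity)
  have hΩpos : 0 < Ω := Real.sqrt_pos.2 (by positivity)
  have hΩlt : Ω < 1 := by
    rw [show (1:ℝ) = Real.sqrt 1 by simp]
    exact Real.sqrt_lt_sqrt (by positivity) (by rw [div_lt_one h2]; linarith)
  set B : ℝ := Real.sqrt (1 - Ω ^ 2) with hB
  set s : ℝ := Real.sqrt (2 * τ + 4) with hs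
  have hΩsq1 : Ω ^ 2 < 1 := by nlinarith
  have hBsq : B ^ 2 = 1 - Ω ^ 2 := Real.sq_sqrt (by nlinarith)
  have hssq : s ^ 2 = 2 * τ + 4 := Real.sq_sqrt (by linarith)
  have hBpos : 0 < B := Real.sqrt_pos.2 (by nlinarith)
  have hspos : 0 < s := Real.sqrt_pos.2 (by linarith)
  have hsB : s * B = 2 := by
    have h1 : (s * B) ^ 2 = 2 ^ 2 := by
      rw [mul_pow, hBsq, hssq, hΩsq]; field_simp; ring
    have h2' : 0 ≤ s * B := by positivity
    nlinarith
  set G : ℝ → ℝ := fun y =>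
    2 / (π * s) * (s / 2 * Real.arcsin (y * B / (Ω * Real.sqrt (1 - y ^ 2)))
      - Real.arcsin (y / Ω)) with hG
  set f : ℝ → ℝ := fun x =>
    2 * x ^ 2 / (π * (1 - x ^ 2) * Real.sqrt (2 * τ - 2 * (τ + 2) * x ^ 2)) with hf
  have hπ : (0:ℝ) < π := Real.pi_pos
  -- continuity of G on Icc
  have hGcont : ContinuousOn G (Icc (-Ω) Ω) := by
    apply ContinuousOn.mul continuousOn_const
    apply ContinuousOn.sub
    · apply ContinuousOn.mul continuousOn_const
      apply Real.continuous_arcsin.comp_continuousOn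
      apply ContinuousOn.div (by fun_prop)
      · exact (continuous_const.mul ((continuous_const.sub
          (continuous_pow 2)).sqrt)).continuousOn
      · intro x hx
        have hx2 : x ^ 2 < 1 := by
          have := hx.1; have := hx.2
          nlinarith
        have : 0 < Real.sqrt (1 - x ^ 2) := Real.sqrt_pos.2 (by nlinarith)
        positivity
    · exact (Real.continuous_arcsin.comp (continuous_id.div_const Ω)).continuousOn
  -- derivative of G on Ioo
  have hGderiv : ∀ x ∈ Ioo (-Ω) Ω, HasDerivAt G (f x) x := by
    intro x hx
    have hx2Ω : x ^ 2 < Ω ^ 2 := sq_lt_sq' hx.1 hx.2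
    have hx21 : x ^ 2 < 1 := by nlinarith
    have h1x : 0 < 1 - x ^ 2 := by linarith
    have hΩx : 0 < Ω ^ 2 - x ^ 2 := by linarith
    have hsx : 0 < Real.sqrt (1 - x ^ 2) := Real.sqrt_pos.2 h1x
    have hsΩ : 0 < Real.sqrt (Ω ^ 2 - x ^ 2) := Real.sqrt_pos.2 hΩx
    have hsxsq : Real.sqrt (1 - x ^ 2) ^ 2 = 1 - x ^ 2 := Real.sq_sqrt h1x.le
    have hsΩsq : Real.sqrt (Ω ^ 2 - x ^ 2) ^ 2 = Ω ^ 2 - x ^ 2 := Real.sq_sqrt hΩx.le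
    -- inner sqrt derivative
    have hsqrtD : HasDerivAt (fun y : ℝ => Real.sqrt (1 - y ^ 2))
        (-(2 * x) / (2 * Real.sqrt (1 - x ^ 2))) x := by
      have h1 : HasDerivAt (fun y : ℝ => 1 - y ^ 2) (-(2 * x)) x := by
        simpa using (hasDerivAt_pow 2 x).const_sub 1
      exact h1.sqrt (by nlinarith)
    -- u and its derivative
    have huD : HasDerivAt (fun y : ℝ => y * B / (Ω * Real.sqrt (1 - y ^ 2)))
        ((B * (Ω * Real.sqrt (1 - x ^ 2)) - x * B * (Ω * (-(2 * x) / (2 * Real.sqrt (1 - x ^ 2)))))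
          / (Ω * Real.sqrt (1 - x ^ 2)) ^ 2) x := by
      have := ((hasDerivAt_id x).mul_const B).div (hsqrtD.const_mul Ω) (by positivity)
      simp at this; exact this
    set u : ℝ := x * B / (Ω * Real.sqrt (1 - x ^ 2)) with hu
    have husq : u ^ 2 < 1 := by
      rw [hu, div_pow, mul_pow, mul_pow, hBsq, hsxsq]
      rw [div_lt_one (by positivity)]
      nlinarith
    have hu1 : u ≠ 1 := by intro h; rw [h] at husq; norm_num at husq
    have hu2 : u ≠ -1 := by intro h; rw [h] at husq; norm_num at husq
    have harc1 : HasDerivAt (fun y : ℝ => Real.arcsin (y * B / (Ω * Real.sqrt (1 - y ^ 2))))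
        (1 / Real.sqrt (1 - u ^ 2) *
          ((B * (Ω * Real.sqrt (1 - x ^ 2)) - x * B * (Ω * (-(2 * x) / (2 * Real.sqrt (1 - x ^ 2)))))
          / (Ω * Real.sqrt (1 - x ^ 2)) ^ 2)) x :=
      by have h := (Real.hasDerivAt_arcsin hu2 hu1).comp x huD; exact h
    have hxΩ1 : (x / Ω) ^ 2 < 1 := by
      rw [div_pow, div_lt_one (by positivity)]; exact hx2Ω
    have hxΩa : x / Ω ≠ 1 := by intro h; rw [h] at hxΩ1; norm_num at hxΩ1
    have hxΩb : x / Ω ≠ -1 := by intro h; rw [h] at hxΩ1; norm_num at hxΩ1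
    have harc2 : HasDerivAt (fun y : ℝ => Real.arcsin (y / Ω))
        (1 / Real.sqrt (1 - (x / Ω) ^ 2) * (1 / Ω)) x :=
      by have h := (Real.hasDerivAt_arcsin hxΩb hxΩa).comp x ((hasDerivAt_id x).div_const Ω); exact h
    have hD : HasDerivAt G
        (2 / (π * s) * (s / 2 * (1 / Real.sqrt (1 - u ^ 2) *
          ((B * (Ω * Real.sqrt (1 - x ^ 2)) - x * B * (Ω * (-(2 * x) / (2 * Real.sqrt (1 - x ^ 2)))))
          / (Ω * Real.sqrt (1 - x ^ 2)) ^ 2))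
          - 1 / Real.sqrt (1 - (x / Ω) ^ 2) * (1 / Ω))) x :=
      ((harc1.const_mul (s / 2)).sub harc2).const_mul (2 / (π * s))
    convert hD using 1
    -- now show f x equals that expression
    have hval1 : 1 - u ^ 2 = (Ω ^ 2 - x ^ 2) / (Ω ^ 2 * (1 - x ^ 2)) := by
      rw [hu, div_pow, mul_pow, mul_pow, hBsq, hsxsq]
      field_simp
      ring
    have e1 : Real.sqrt (1 - u ^ 2) = Real.sqrt (Ω ^ 2 - x ^ 2) / (Ω * Real.sqrt (1 - x ^ 2)) := by
      rw [hval1, Real.sqrt_div hΩx.le, Real.sqrt_mul (by positivity), Real.sqrt_sq hΩpos.le]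
    have e2 : Real.sqrt (1 - (x / Ω) ^ 2) = Real.sqrt (Ω ^ 2 - x ^ 2) / Ω := by
      rw [show 1 - (x / Ω) ^ 2 = (Ω ^ 2 - x ^ 2) / Ω ^ 2 by field_simp,
        Real.sqrt_div hΩx.le, Real.sqrt_sq hΩpos.le]
    have e3 : Real.sqrt (2 * τ - 2 * (τ + 2) * x ^ 2) = s * Real.sqrt (Ω ^ 2 - x ^ 2) := by
      rw [hs, ← Real.sqrt_mul (by linarith)]
      congr 1
      have hkey : (2 * τ + 4) * Ω ^ 2 = 2 * τ := by rw [hΩsq]; field_simp; ring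
      linear_combination -hkey
    rw [hf]
    simp only
    rw [e1, e2, e3, show s = 2 / B by rw [eq_div_iff hBpos.ne']; exact hsB]
    rw [div_div_eq_mul_div]
    field_simp
    linear_combination x ^ 2 * hsxsq
  -- nonnegativity of f on Ioo
  have hfnn : ∀ x ∈ Ioo (-Ω) Ω, 0 ≤ f x := by
    intro x hx
    have hx2Ω : x ^ 2 < Ω ^ 2 := sq_lt_sq' hx.1 hx.2
    have hx21 : x ^ 2 < 1 := by nlinarith
    apply div_nonneg (by positivity)
    have : (0:ℝ) ≤ Real.sqrt (2 * τ - 2 * (τ + 2) * x ^ 2) := Real.sqrt_nonneg _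
    have h1x : (0:ℝ) ≤ 1 - x ^ 2 := by linarith
    positivity
  -- integrability
  have hint : IntervalIntegrable f MeasureTheory.volume (-Ω) Ω := by
    apply intervalIntegrable_deriv_of_nonneg (g := G)
    · rwa [uIcc_of_le (by linarith)]
    · simpa [min_eq_left (by linarith : -Ω ≤ Ω), max_eq_right (by linarith : -Ω ≤ Ω)] using hGderiv
    · simpa [min_eq_left (by linarith : -Ω ≤ Ω), max_eq_right (by linarith : -Ω ≤ Ω)] using hfnn
  have key : (∫ x in (-Ω)..Ω, f x) = G Ω - G (-Ω) :=
    integral_eq_sub_of_hasDerivAt_of_le (by linarith) hGcont hGderiv hint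
  have hGΩ : G Ω = 2 / (π * s) * (s / 2 * (π / 2) - π / 2) := by
    rw [hG]
    simp only
    rw [show Ω * B / (Ω * Real.sqrt (1 - Ω ^ 2)) = 1 by
      rw [← hB]; field_simp [hΩpos.ne', hBpos.ne']]
    rw [div_self hΩpos.ne', Real.arcsin_one]
  have hGnΩ : G (-Ω) = 2 / (π * s) * (s / 2 * (-(π / 2)) + π / 2) := by
    rw [hG]
    simp only
    rw [show -Ω * B / (Ω * Real.sqrt (1 - (-Ω) ^ 2)) = -1 by
      rw [show ((-Ω):ℝ) ^ 2 = Ω ^ 2 by ring, ← hB]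
      field_simp [hΩpos.ne', hBpos.ne']]
    rw [show -Ω / Ω = -1 by field_simp]
    rw [Real.arcsin_neg_one]
    ring
  have h2s : 2 / s = s / (τ + 2) := by
    rw [div_eq_div_iff hspos.ne' (ne_of_gt h2)]
    linear_combination -hssq
  have hform : 2 / (π * s) * (s / 2 * (π / 2) - π / 2)
      - 2 / (π * s) * (s / 2 * (-(π / 2)) + π / 2) = 1 - 2 / s := by
    field_simp
    ring
  rw [show (∫ x in (-Ω)..Ω,
        2 * x ^ 2 / (π * (1 - x ^ 2) * Real.sqrt (2 * τ - 2 * (τ + 2) * x ^ 2)))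
      = ∫ x in (-Ω)..Ω, f x from rfl, key, hGΩ, hGnΩ, hform, h2s]
end
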